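/- The set of solutions of a constraint set is closed under pointwise infima: if μᵢ ⊨ ς for every member μᵢ of a (possibly infinite) family of constraint mappings, then the pointwise meet ⨅ᵢ μᵢ also satisfies ς. -/
import Mathlib


/-! Belnap's four-valued lattice 𝔹₄ as pairs of Booleans (can-be-true, can-be-false):
    ⊥ = (false,false), 𝖿 = (false,true), 𝗍 = (true,false), ⊤ = (true,true),
    with the approximation ordering ⊑ being the componentwise (subset) Boolean
    ordering, i.e. the default `Prod` order. -/
abbrev B4 := Bool × Bool

/-- Belnap negation: ¬(a₁,a₂) = (a₂,a₁). -/
def B4.neg (a : B4) : B4 := (a.2, a.1)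
/-- Belnap conjunction: (a₁,a₂) ∧ (b₁,b₂) = (a₁ ∧ b₁, a₂ ∨ b₂). -/
def B4.and (a b : B4) : B4 := (a.1 && b.1, a.2 || b.2)
/-- Belnap disjunction: (a₁,a₂) ∨ (b₁,b₂) = (a₁ ∨ b₁, a₂ ∧ b₂). -/
def B4.or (a b : B4) : B4 := (a.1 || b.1, a.2 && b.2)
/-- Belnap implication a ⇒ b := ¬a ∨ b. -/
def B4.imp (a b : B4) : B4 := B4.or (B4.neg a) b
/-- The truth value 𝗍. -/
def B4.t : B4 := (true, false)
/-- Translation ⌈·⌉ of a classical outcome into 𝔹₄ (⌈true⌉ = 𝗍, ⌈false⌉ = 𝖿). -/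
def B4.ofBool (b : Bool) : B4 := (b, !b)

/-- Blame identifiers ♭: source-level blame labels ℓ or internal blame variables ι. -/
inductive BlameId : Type
  | lbl (n : ℕ)   -- source-level blame label ℓ
  | var (n : ℕ)   -- internal blame variable ι
deriving DecidableEq

/-- The two record fields of a blame identifier. -/
inductive BField : Type
  | subject
  | context
deriving DecidableEq

/-- Constraint mappings μ : (BlameId × {subject, context}) → 𝔹₄. -/
abbrev CMap := BlameId × BField → B4

/-- μ(ι.subject) for an internal variable ι. -/
def subj (μ : CMap) (i : ℕ) : B4 := μ (BlameId.var i, BField.subject)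
/-- μ(ι.context) for an internal variable ι. -/
def ctx (μ : CMap) (i : ℕ) : B4 := μ (BlameId.var i, BField.context)

/-- Constraints κ (Figure 2): ♭ ◁ v, ♭ ◁ ι₁ → ι₂, ♭ ◁ set(ι), ♭ ◁ ι₁ ∩ ι₂,
    ♭ ◁ ι₁ ∪ ι₂, ♭ ◁ ι₁ ∧ ι₂, ♭ ◁ ι₁ ∨ ι₂, ♭ ◁ ¬ι. -/
inductive Constraint : Type
  | flat  (b : BlameId) (v : Bool)       -- ♭ ◁ v (outcome of a base contract)
  | fc    (b : BlameId) (i1 i2 : ℕ)      -- ♭ ◁ ι₁ → ι₂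
  | set   (b : BlameId) (i : ℕ)          -- ♭ ◁ set(ι)
  | inter (b : BlameId) (i1 i2 : ℕ)      -- ♭ ◁ ι₁ ∩ ι₂
  | union (b : BlameId) (i1 i2 : ℕ)      -- ♭ ◁ ι₁ ∪ ι₂
  | conj  (b : BlameId) (i1 i2 : ℕ)      -- ♭ ◁ ι₁ ∧ ι₂
  | disj  (b : BlameId) (i1 i2 : ℕ)      -- ♭ ◁ ι₁ ∨ ι₂
  | neg   (b : BlameId) (i : ℕ)          -- ♭ ◁ ¬ι
deriving DecidableEq

/-- The head ♭ of a constraint. -/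
def Constraint.head : Constraint → BlameId
  | flat b _ => b | fc b _ _ => b | set b _ => b | inter b _ _ => b
  | union b _ _ => b | conj b _ _ => b | disj b _ _ => b | neg b _ => b

/-- Right-hand side (Figure 3) of the ⊑-inequality for μ(♭.subject). -/
def Constraint.subjRHS : Constraint → CMap → B4
  | flat _ v, _ => B4.ofBool v
  | fc _ i1 i2, μ => B4.and (ctx μ i1) (B4.imp (subj μ i1) (subj μ i2))
  | set _ _, _ => B4.t
  | inter _ i1 i2, μ => B4.and (subj μ i1) (subj μ i2)
  | union _ i1 i2, μ => B4.or (subj μ i1) (subj μ i2)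
  | conj _ i1 i2, μ =>
      B4.imp (B4.and (ctx μ i1) (ctx μ i2)) (B4.and (subj μ i1) (subj μ i2))
  | disj _ i1 i2, μ =>
      B4.imp (B4.or (ctx μ i1) (ctx μ i2))
        (B4.or (B4.and (ctx μ i1) (subj μ i1)) (B4.and (ctx μ i2) (subj μ i2)))
  | neg _ i, μ => B4.imp (subj μ i) (B4.neg (ctx μ i))

/-- Right-hand side (Figure 3) of the ⊑-inequality for μ(♭.context). -/
def Constraint.ctxRHS : Constraint → CMap → B4
  | flat _ _, _ => B4.t
  | fc _ i1 i2, μ => B4.and (subj μ i1) (ctx μ i2)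
  | set _ i, μ => subj μ i
  | inter _ i1 i2, μ => B4.or (ctx μ i1) (ctx μ i2)
  | union _ i1 i2, μ => B4.and (ctx μ i1) (ctx μ i2)
  | conj _ i1 i2, μ => B4.and (ctx μ i1) (ctx μ i2)
  | disj _ i1 i2, μ => B4.or (ctx μ i1) (ctx μ i2)
  | neg _ _, _ => B4.t

/-- The right-hand side of the Figure 3 inequality for field `p` of the head. -/
def Constraint.rhs (κ : Constraint) (p : BField) (μ : CMap) : B4 :=
  match p with
  | BField.subject => κ.subjRHS μ
  | BField.context => κ.ctxRHS μ

/-- μ satisfies a single constraint κ: the two ⊑-inequalities of Figure 3. -/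
def SatC (μ : CMap) (κ : Constraint) : Prop :=
  κ.subjRHS μ ≤ μ (κ.head, BField.subject) ∧ κ.ctxRHS μ ≤ μ (κ.head, BField.context)

/-- μ ⊨ ς: μ is a solution of the constraint set ς. -/
def Sat (μ : CMap) (ς : Finset Constraint) : Prop := ∀ κ ∈ ς, SatC μ κ

lemma B4.and_mono : ∀ {a a' b b' : B4}, a ≤ a' → b ≤ b' → B4.and a b ≤ B4.and a' b' := by
  decide

lemma B4.or_mono : ∀ {a a' b b' : B4}, a ≤ a' → b ≤ b' → B4.or a b ≤ B4.or a' b' := by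
  decide

lemma B4.neg_mono : ∀ {a a' : B4}, a ≤ a' → B4.neg a ≤ B4.neg a' := by
  decide

lemma B4.imp_mono : ∀ {a a' b b' : B4}, a ≤ a' → b ≤ b' → B4.imp a b ≤ B4.imp a' b' := by
  decide

lemma rhs_mono (κ : Constraint) (p : BField) {μ ν : CMap} (h : μ ≤ ν) :
    κ.rhs p μ ≤ κ.rhs p ν := by
  have hs : ∀ i, subj μ i ≤ subj ν i := fun i => h _
  have hc : ∀ i, ctx μ i ≤ ctx ν i := fun i => h _
  cases κ <;> cases p <;>
    simp only [Constraint.rhs, Constraint.subjRHS, Constraint.ctxRHS] <;>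
    first
      | exact le_refl _
      | (repeat' first
          | exact hs _
          | exact hc _
          | apply B4.and_mono
          | apply B4.or_mono
          | apply B4.imp_mono
          | apply B4.neg_mono)

/-- The set of solutions of a constraint set is closed under pointwise infima:
    if every member of a (possibly infinite) family of constraint mappings
    satisfies ς, then so does the pointwise infimum ⨅ i, μ i. -/
theorem sat_iInf {I : Sort*} (ς : Finset Constraint) (μ : I → CMap)
    (h : ∀ i, Sat (μ i) ς) : Sat (⨅ i, μ i) ς := by
  intro κ hκ
  have key : ∀ p, κ.rhs p (⨅ i, μ i) ≤ (⨅ i, μ i) (κ.head, p) := by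
    intro p
    rw [iInf_apply]
    refine le_iInf fun i => le_trans (rhs_mono κ p (iInf_le μ i)) ?_
    cases p
    · exact (h i κ hκ).1
    · exact (h i κ hκ).2
  exact ⟨key .subject, key .context⟩
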